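/- arXiv:1711.08757 — 4 statements merged into one kernel-verified Lean document; each statement's English description precedes it below -/
import Mathlib

section
/- Refined expander mixing lemma. Let n, D be positive integers and λ ≥ 0 a real number. Let A be an n×n real matrix with entries in {0,1} that is D-biregular and has second singular value at most λ. Then for all subsets S, T of Fin n, |E(S,T) − D·|S|·|T|/n| ≤ λ·√(|S|·|T|·(1 − |S|/n)·(1 − |T|/n)). -/
/-!
Split the indicators of `S` and `T` into their means and the centered parts `x`, `y`, which sum
to zero and have `‖x‖² = |S| (1 - |S|/n)`. Because every row and column of `A` sums to `D`, the
mean parts account for exactly `D |S| |T| / n` of `E(S,T) = ⟨1_T, A 1_S⟩`, so the deviation is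
`⟨y, A x⟩`; Cauchy–Schwarz and the bound on `A` off the constants give `λ ‖x‖ ‖y‖`.
-/

open Finset Matrix

section

variable {ι : Type*} [Fintype ι]

theorem abs_dotProduct_le_sqrt_mul_sqrt (x y : ι → ℝ) :
    |x ⬝ᵥ y| ≤ √(∑ i, x i ^ 2) * √(∑ i, y i ^ 2) := by
  refine abs_le'.mpr ⟨Real.sum_mul_le_sqrt_mul_sqrt _ x y, ?_⟩
  simpa [dotProduct] using Real.sum_mul_le_sqrt_mul_sqrt univ (-x) y

variable [DecidableEq ι]

noncomputable def Finset.centeredIndicator (S : Finset ι) : ι → ℝ :=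
  fun i => (if i ∈ S then 1 else 0) - #S / Fintype.card ι

theorem Finset.centeredIndicator_dotProduct (S : Finset ι) (w : ι → ℝ) :
    S.centeredIndicator ⬝ᵥ w = ∑ i ∈ S, w i - #S / Fintype.card ι * ∑ i, w i := by
  simp only [dotProduct, centeredIndicator, sub_mul, sum_sub_distrib, ite_mul, one_mul,
    zero_mul, sum_ite_mem, univ_inter, mul_sum]

theorem Finset.sum_centeredIndicator (S : Finset ι) : ∑ i, S.centeredIndicator i = 0 := by
  -- for empty `ι` the junk value `#S / 0 = 0` is harmless because `#S = 0`
  have hS : Fintype.card ι = 0 → #S = 0 := fun h => by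
    simpa [h] using S.card_le_univ
  rw [← dotProduct_one, centeredIndicator_dotProduct]
  simp only [Pi.one_apply, sum_const, nsmul_eq_mul, mul_one, card_univ]
  rw [div_mul_cancel_of_imp (by exact_mod_cast hS), sub_self]

theorem Finset.sum_centeredIndicator_sq (S : Finset ι) :
    ∑ i, S.centeredIndicator i ^ 2 = #S * (1 - #S / Fintype.card ι) := by
  simp only [sq]
  rw [← dotProduct, centeredIndicator_dotProduct, sum_centeredIndicator, mul_zero, sub_zero]
  rw [sum_congr rfl fun i hi => show S.centeredIndicator i = 1 - #S / Fintype.card ι by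
    simp [centeredIndicator, hi]]
  simp [mul_sub]

theorem Finset.centeredIndicator_dotProduct_mulVec {A : Matrix ι ι ℝ} {d : ℝ}
    (hrow : ∀ v, ∑ u, A v u = d) (hcol : ∀ u, ∑ v, A v u = d) (S T : Finset ι) :
    T.centeredIndicator ⬝ᵥ A *ᵥ S.centeredIndicator =
      ∑ v ∈ T, ∑ u ∈ S, A v u - d * #S * #T / Fintype.card ι := by
  have hAx : ∀ v, (A *ᵥ S.centeredIndicator) v = ∑ u ∈ S, A v u - #S / Fintype.card ι * d := by
    intro v
    rw [mulVec, dotProduct_comm, centeredIndicator_dotProduct, hrow]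
  have hcolS : ∑ v, ∑ u ∈ S, A v u = d * #S :=
    sum_comm.trans (by simp [hcol, mul_comm])
  simp only [centeredIndicator_dotProduct, hAx, sum_sub_distrib, hcolS, sum_const, card_univ,
    nsmul_eq_mul]
  rcases eq_or_ne (Fintype.card ι : ℝ) 0 with h | h
  · simp [h]
  · field_simp
    ring

end

theorem refined_expander_mixing_lemma_general
    (n D : ℕ) (lam : ℝ)
    (A : Matrix (Fin n) (Fin n) ℝ)
    (hrow : ∀ v, ∑ u, A v u = D)
    (hcol : ∀ u, ∑ v, A v u = D)
    (hsv : ∀ x : Fin n → ℝ, (∑ i, x i) = 0 →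
      Real.sqrt (∑ i, (A.mulVec x i) ^ 2) ≤ lam * Real.sqrt (∑ i, (x i) ^ 2))
    (S T : Finset (Fin n)) :
    |(∑ v ∈ T, ∑ u ∈ S, A v u) - (D : ℝ) * S.card * T.card / n| ≤
      lam * Real.sqrt ((S.card : ℝ) * T.card *
        (1 - (S.card : ℝ) / n) * (1 - (T.card : ℝ) / n)) := by
  calc |(∑ v ∈ T, ∑ u ∈ S, A v u) - (D : ℝ) * S.card * T.card / n|
      = |T.centeredIndicator ⬝ᵥ A *ᵥ S.centeredIndicator| := by
        rw [centeredIndicator_dotProduct_mulVec hrow hcol, Fintype.card_fin]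
    _ ≤ √(∑ i, T.centeredIndicator i ^ 2) * √(∑ i, (A *ᵥ S.centeredIndicator) i ^ 2) :=
        abs_dotProduct_le_sqrt_mul_sqrt _ _
    _ ≤ √(∑ i, T.centeredIndicator i ^ 2) * (lam * √(∑ i, S.centeredIndicator i ^ 2)) := by
        gcongr; exact hsv _ S.sum_centeredIndicator
    _ = lam * √((∑ i, S.centeredIndicator i ^ 2) * ∑ i, T.centeredIndicator i ^ 2) := by
        rw [mul_left_comm, mul_comm (√_), ← Real.sqrt_mul (by positivity)]
    _ = _ := by
        rw [sum_centeredIndicator_sq, sum_centeredIndicator_sq, Fintype.card_fin]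
        congr 2
        ring

/-- Refined expander mixing lemma: for a 0/1, D-biregular n×n matrix `A` with second
singular value at most `lam`, and subsets S, T of `Fin n`,
`|E(S,T) − D·|S|·|T|/n| ≤ lam·√(|S|·|T|·(1 − |S|/n)·(1 − |T|/n))`. -/
theorem refined_expander_mixing_lemma
    (n D : ℕ) (hn : 0 < n) (hD : 0 < D) (lam : ℝ) (hlam : 0 ≤ lam)
    (A : Matrix (Fin n) (Fin n) ℝ)
    (hA01 : ∀ v u, A v u = 0 ∨ A v u = 1)
    (hrow : ∀ v, ∑ u, A v u = D)
    (hcol : ∀ u, ∑ v, A v u = D)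
    (hsv : ∀ x : Fin n → ℝ, (∑ i, x i) = 0 →
      Real.sqrt (∑ i, (A.mulVec x i) ^ 2) ≤ lam * Real.sqrt (∑ i, (x i) ^ 2))
    (S T : Finset (Fin n)) :
    |(∑ v ∈ T, ∑ u ∈ S, A v u) - (D : ℝ) * S.card * T.card / n| ≤
      lam * Real.sqrt ((S.card : ℝ) * T.card *
        (1 - (S.card : ℝ) / n) * (1 - (T.card : ℝ) / n)) :=
  refined_expander_mixing_lemma_general n D lam A hrow hcol hsv S T
end

section
/- Theorem 1 of the paper (Sensitivity of X-Nets, spectral form, distinct layers). Let n be a positive integer, and for i = 1,…,t let Aᵢ be an n×n real matrix with entries in {0,1} that is Dᵢ-biregular and has second singular value at most λᵢ. If n·∏ᵢ λᵢ < ∏ᵢ Dᵢ, then every entry of the product A_t ⋯ A_1 is strictly positive; that is, for every input node u and every output node v there is a path of length t from u to v through the network, so every output neuron is sensitive to every input neuron. -/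
/-! Split the indicator vector of `u` as `𝟙/n + x` with `∑ x = 0` and `‖x‖ ≤ 1`. By biregularity the
product `P = A_t ⋯ A_1` maps `𝟙` to `(∏ Dᵢ) 𝟙` (row sums) and keeps mean-zero vectors mean-zero
(column sums), so the spectral bound applies layer by layer and `|(P x)_v| ≤ ‖P x‖ ≤ ∏ λᵢ`. Hence
`P v u = (∏ Dᵢ)/n + (P x)_v ≥ (∏ Dᵢ)/n - ∏ λᵢ > 0`. -/

/-- The product of the layer matrices `A t * A (t-1) * ⋯ * A 1` of a deep network
(layers indexed `1, …, t`). -/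
def layerProd {n : ℕ} (A : ℕ → Matrix (Fin n) (Fin n) ℝ) : ℕ → Matrix (Fin n) (Fin n) ℝ
  | 0 => 1
  | k + 1 => A (k + 1) * layerProd A k

open Finset Matrix

section SingleMatrix

variable {ι : Type*} [Fintype ι]

theorem Matrix.sum_mulVec_of_col_sum {M : Matrix ι ι ℝ} {c : ℝ} (hcol : ∀ u, ∑ v, M v u = c)
    (x : ι → ℝ) : ∑ j, (M *ᵥ x) j = c * ∑ j, x j := by
  simp only [mulVec, dotProduct, mul_sum]
  rw [sum_comm]
  exact sum_congr rfl fun u _ => by rw [← hcol u, sum_mul]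

theorem Matrix.mulVec_const_of_row_sum {M : Matrix ι ι ℝ} {c : ℝ} (hrow : ∀ v, ∑ u, M v u = c)
    (a : ℝ) : M *ᵥ (fun _ => a) = fun _ => c * a := by
  ext v
  simp only [mulVec, dotProduct, ← hrow v, sum_mul]

theorem abs_le_sqrt_sum_sq (y : ι → ℝ) (v : ι) : |y v| ≤ Real.sqrt (∑ j, y j ^ 2) :=
  Real.abs_le_sqrt <| single_le_sum (f := fun j => y j ^ 2) (fun _ _ => sq_nonneg _) (mem_univ v)

theorem Matrix.pos_of_mulVec_const_of_spectral_gap [DecidableEq ι] (M : Matrix ι ι ℝ) {c μ : ℝ}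
    (hμ : 0 ≤ μ) (hconst : M *ᵥ (fun _ => 1) = fun _ => c)
    (hsv : ∀ x : ι → ℝ, ∑ j, x j = 0 →
      Real.sqrt (∑ j, (M *ᵥ x) j ^ 2) ≤ μ * Real.sqrt (∑ j, x j ^ 2))
    (hgap : Fintype.card ι * μ < c) (v u : ι) : 0 < M v u := by
  set N : ℝ := (Fintype.card ι : ℝ)
  have hN : 0 < N := Nat.cast_pos.mpr (Fintype.card_pos_iff.mpr ⟨u⟩)
  set x : ι → ℝ := Pi.single u 1 - (1 / N) • fun _ => 1
  have hx_sum : ∑ j, x j = 0 := by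
    simp [x, sum_sub_distrib, N, hN.ne']
  -- `x` is orthogonal to `𝟙`, so `‖x‖² = ⟪x, Pi.single u 1⟫ = x u`.
  have hx_norm : Real.sqrt (∑ j, x j ^ 2) ≤ 1 := by
    have : ∑ j, x j ^ 2 = x u := by
      calc ∑ j, x j ^ 2 = ∑ j, (x j * (Pi.single u 1 : ι → ℝ) j - 1 / N * x j) :=
            sum_congr rfl fun j _ => by
              simp only [sq, x, Pi.sub_apply, Pi.smul_apply, smul_eq_mul]; ring
        _ = x ⬝ᵥ Pi.single u 1 - 1 / N * ∑ j, x j := by rw [sum_sub_distrib, mul_sum]; rfl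
        _ = x u := by rw [dotProduct_single_one, hx_sum, mul_zero, sub_zero]
    rw [Real.sqrt_le_one, this]
    simp [x, hN.le]
  have hentry : (M *ᵥ x) v = M v u - c / N := by
    simp [x, mulVec_sub, mulVec_smul, hconst, div_eq_inv_mul]
  have hbound : |(M *ᵥ x) v| ≤ μ :=
    calc |(M *ᵥ x) v| ≤ Real.sqrt (∑ j, (M *ᵥ x) j ^ 2) := abs_le_sqrt_sum_sq _ v
      _ ≤ μ * Real.sqrt (∑ j, x j ^ 2) := hsv x hx_sum
      _ ≤ μ := mul_le_of_le_one_right hμ hx_norm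
  have : μ < c / N := by rwa [lt_div_iff₀ hN, mul_comm]
  linarith [neg_abs_le ((M *ᵥ x) v)]

end SingleMatrix

section Layers

variable {n : ℕ} (A : ℕ → Matrix (Fin n) (Fin n) ℝ)

theorem layerProd_succ_mulVec (k : ℕ) (x : Fin n → ℝ) :
    layerProd A (k + 1) *ᵥ x = A (k + 1) *ᵥ (layerProd A k *ᵥ x) := by
  rw [layerProd, mulVec_mulVec]

theorem layerProd_mulVec_const {k : ℕ} {d : ℕ → ℝ}
    (hrow : ∀ i, 1 ≤ i → i ≤ k → ∀ v, ∑ u, A i v u = d i) :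
    layerProd A k *ᵥ (fun _ => 1) = fun _ => ∏ i ∈ Icc 1 k, d i := by
  induction k with
  | zero => simp [layerProd]
  | succ k ih =>
    rw [layerProd_succ_mulVec, ih fun i h1 h2 => hrow i h1 (h2.trans k.le_succ),
      mulVec_const_of_row_sum (hrow (k + 1) k.succ_pos le_rfl), prod_Icc_succ_top k.succ_pos,
      mul_comm]

theorem sum_layerProd_mulVec_eq_zero {k : ℕ} {d : ℕ → ℝ}
    (hcol : ∀ i, 1 ≤ i → i ≤ k → ∀ u, ∑ v, A i v u = d i) {x : Fin n → ℝ}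
    (hx : ∑ j, x j = 0) : ∑ j, (layerProd A k *ᵥ x) j = 0 := by
  induction k with
  | zero => simpa [layerProd] using hx
  | succ k ih =>
    rw [layerProd_succ_mulVec, sum_mulVec_of_col_sum (hcol (k + 1) k.succ_pos le_rfl),
      ih fun i h1 h2 => hcol i h1 (h2.trans k.le_succ), mul_zero]

theorem sqrt_sum_sq_layerProd_mulVec_le {k : ℕ} {d lam : ℕ → ℝ}
    (hlam : ∀ i, 1 ≤ i → i ≤ k → 0 ≤ lam i)
    (hcol : ∀ i, 1 ≤ i → i ≤ k → ∀ u, ∑ v, A i v u = d i)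
    (hsv : ∀ i, 1 ≤ i → i ≤ k → ∀ x : Fin n → ℝ, (∑ j, x j) = 0 →
      Real.sqrt (∑ j, (A i *ᵥ x) j ^ 2) ≤ lam i * Real.sqrt (∑ j, x j ^ 2))
    {x : Fin n → ℝ} (hx : ∑ j, x j = 0) :
    Real.sqrt (∑ j, (layerProd A k *ᵥ x) j ^ 2) ≤
      (∏ i ∈ Icc 1 k, lam i) * Real.sqrt (∑ j, x j ^ 2) := by
  induction k with
  | zero => simp [layerProd]
  | succ k ih =>
    have hcol' : ∀ i, 1 ≤ i → i ≤ k → ∀ u, ∑ v, A i v u = d i :=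
      fun i h1 h2 => hcol i h1 (h2.trans k.le_succ)
    calc Real.sqrt (∑ j, (layerProd A (k + 1) *ᵥ x) j ^ 2)
        ≤ lam (k + 1) * Real.sqrt (∑ j, (layerProd A k *ᵥ x) j ^ 2) := by
          rw [layerProd_succ_mulVec]
          exact hsv (k + 1) k.succ_pos le_rfl _ (sum_layerProd_mulVec_eq_zero A hcol' hx)
      _ ≤ lam (k + 1) * ((∏ i ∈ Icc 1 k, lam i) * Real.sqrt (∑ j, x j ^ 2)) :=
          mul_le_mul_of_nonneg_left
            (ih (fun i h1 h2 => hlam i h1 (h2.trans k.le_succ)) hcol'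
              fun i h1 h2 => hsv i h1 (h2.trans k.le_succ))
            (hlam (k + 1) k.succ_pos le_rfl)
      _ = (∏ i ∈ Icc 1 (k + 1), lam i) * Real.sqrt (∑ j, x j ^ 2) := by
          rw [prod_Icc_succ_top k.succ_pos]; ring

end Layers

theorem sensitivity_of_xnets_spectral_general
    (n t : ℕ)
    (A : ℕ → Matrix (Fin n) (Fin n) ℝ) (D : ℕ → ℕ) (lam : ℕ → ℝ)
    (hlam : ∀ i, 1 ≤ i → i ≤ t → 0 ≤ lam i)
    (hrow : ∀ i, 1 ≤ i → i ≤ t → ∀ v, ∑ u, A i v u = D i)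
    (hcol : ∀ i, 1 ≤ i → i ≤ t → ∀ u, ∑ v, A i v u = D i)
    (hsv : ∀ i, 1 ≤ i → i ≤ t → ∀ x : Fin n → ℝ, (∑ j, x j) = 0 →
      Real.sqrt (∑ j, ((A i).mulVec x j) ^ 2) ≤ lam i * Real.sqrt (∑ j, (x j) ^ 2))
    (hgap : (n : ℝ) * ∏ i ∈ Finset.Icc 1 t, lam i < ∏ i ∈ Finset.Icc 1 t, (D i : ℝ)) :
    ∀ v u, 0 < layerProd A t v u :=
  (layerProd A t).pos_of_mulVec_const_of_spectral_gap
    (prod_nonneg fun i hi => hlam i (mem_Icc.mp hi).1 (mem_Icc.mp hi).2)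
    (layerProd_mulVec_const A hrow)
    (fun _ hx => sqrt_sum_sq_layerProd_mulVec_le A hlam hcol hsv hx)
    (by rwa [Fintype.card_fin])

/-- Theorem 1 of the paper (Sensitivity of X-Nets, spectral form, distinct layers): if
each layer matrix `A i` (i = 1,…,t) is a 0/1, `D i`-biregular n×n matrix with second
singular value at most `lam i`, and `n·∏ᵢ lamᵢ < ∏ᵢ Dᵢ`, then every entry of the
product `A_t ⋯ A_1` is strictly positive: every output neuron is sensitive to every
input neuron. -/
theorem sensitivity_of_xnets_spectral
    (n t : ℕ) (hn : 0 < n)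
    (A : ℕ → Matrix (Fin n) (Fin n) ℝ) (D : ℕ → ℕ) (lam : ℕ → ℝ)
    (hD : ∀ i, 1 ≤ i → i ≤ t → 0 < D i)
    (hlam : ∀ i, 1 ≤ i → i ≤ t → 0 ≤ lam i)
    (hA01 : ∀ i, 1 ≤ i → i ≤ t → ∀ v u, A i v u = 0 ∨ A i v u = 1)
    (hrow : ∀ i, 1 ≤ i → i ≤ t → ∀ v, ∑ u, A i v u = D i)
    (hcol : ∀ i, 1 ≤ i → i ≤ t → ∀ u, ∑ v, A i v u = D i)
    (hsv : ∀ i, 1 ≤ i → i ≤ t → ∀ x : Fin n → ℝ, (∑ j, x j) = 0 →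
      Real.sqrt (∑ j, ((A i).mulVec x j) ^ 2) ≤ lam i * Real.sqrt (∑ j, (x j) ^ 2))
    (hgap : (n : ℝ) * ∏ i ∈ Finset.Icc 1 t, lam i < ∏ i ∈ Finset.Icc 1 t, (D i : ℝ)) :
    ∀ v u, 0 < layerProd A t v u :=
  sensitivity_of_xnets_spectral_general n t A D lam hlam hrow hcol hsv hgap
end

section
/- Theorem 1 of the paper (Sensitivity of X-Nets at logarithmic depth, spectral form). Let n, D be positive integers and 0 < λ < D real numbers. Let A be an n×n real matrix with entries in {0,1} that is D-biregular and has second singular value at most λ. Then for every natural number t satisfying t > Real.log n / Real.log (D/λ), every entry of Aᵗ is strictly positive; in particular, in a network of depth t = O(log n) whose layers are all given by A, every output neuron is sensitive to every input neuron. -/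
/-!
Write `eᵤ = 𝟙/n + x` with `x` orthogonal to the all-ones vector and `‖x‖₂ ≤ 1`. Since every row of
`Aᵗ` sums to `Dᵗ`, the constant part contributes exactly `Dᵗ/n` to the entry `(Aᵗ)ᵥᵤ`; since
`A` maps the zero-sum hyperplane to itself and contracts it by `λ`, the part `x` changes that
entry by at most `λᵗ`. The depth condition on `t` says precisely that `n λᵗ < Dᵗ`.
-/

open Finset Matrix

variable {ι : Type*} [Fintype ι]

theorem Matrix.sum_pow_apply_eq_pow [DecidableEq ι] {R : Type*} [CommSemiring R]
    {A : Matrix ι ι R} {D : R} (hrow : ∀ v, ∑ u, A v u = D) (t : ℕ) (v : ι) :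
    ∑ u, (A ^ t) v u = D ^ t := by
  induction t generalizing v with
  | zero => simp [one_apply]
  | succ t ih =>
    simp only [pow_succ', mul_apply]
    rw [sum_comm]
    simp only [← mul_sum, ih, ← sum_mul, hrow]

theorem Matrix.sum_mulVec_eq_mul_sum {κ R : Type*} [Fintype κ] [CommSemiring R]
    {A : Matrix κ ι R} {D : R} (hcol : ∀ u, ∑ v, A v u = D) (x : ι → R) :
    ∑ v, (A *ᵥ x) v = D * ∑ u, x u := by
  simp only [mulVec, dotProduct]
  rw [sum_comm, mul_sum]
  exact sum_congr rfl fun u _ => by rw [← sum_mul, hcol]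

section SpectralGap

variable [DecidableEq ι] {A : Matrix ι ι ℝ} {D : ℝ} {x : ι → ℝ}

theorem Matrix.sum_pow_mulVec_eq_zero (hcol : ∀ u, ∑ v, A v u = D) (hx : ∑ i, x i = 0)
    (t : ℕ) : ∑ i, (A ^ t *ᵥ x) i = 0 := by
  induction t with
  | zero => simpa using hx
  | succ t ih => rw [pow_succ', ← mulVec_mulVec, sum_mulVec_eq_mul_sum hcol, ih, mul_zero]

theorem Matrix.sqrt_sum_sq_pow_mulVec_le (hcol : ∀ u, ∑ v, A v u = D) (hx : ∑ i, x i = 0)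
    {lam : ℝ} (hlam : 0 ≤ lam)
    (hsv : ∀ x : ι → ℝ, ∑ i, x i = 0 →
      √(∑ i, (A *ᵥ x) i ^ 2) ≤ lam * √(∑ i, x i ^ 2)) (t : ℕ) :
    √(∑ i, (A ^ t *ᵥ x) i ^ 2) ≤ lam ^ t * √(∑ i, x i ^ 2) := by
  induction t with
  | zero => simp
  | succ t ih =>
    rw [pow_succ', ← mulVec_mulVec, pow_succ', mul_assoc]
    exact (hsv _ (sum_pow_mulVec_eq_zero hcol hx t)).trans (mul_le_mul_of_nonneg_left ih hlam)

end SpectralGap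

theorem abs_apply_le_sqrt_sum_sq (x : ι → ℝ) (i : ι) : |x i| ≤ √(∑ j, x j ^ 2) :=
  Real.abs_le_sqrt <|
    single_le_sum (f := fun j => x j ^ 2) (fun j _ => sq_nonneg (x j)) (mem_univ i)

noncomputable def centeredSingle [DecidableEq ι] (u : ι) : ι → ℝ :=
  Pi.single u 1 - fun _ => (Fintype.card ι : ℝ)⁻¹

section centeredSingle

variable [DecidableEq ι] (u : ι)

theorem sum_centeredSingle : ∑ i, centeredSingle u i = 0 := by
  have : (Fintype.card ι : ℝ) ≠ 0 := Nat.cast_ne_zero.mpr (Fintype.card_pos_iff.mpr ⟨u⟩).ne'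
  simp [centeredSingle, sum_sub_distrib, this]

theorem sum_sq_centeredSingle_le_one : ∑ i, centeredSingle u i ^ 2 ≤ 1 := by
  have hcard : (0 : ℝ) < Fintype.card ι := Nat.cast_pos.mpr (Fintype.card_pos_iff.mpr ⟨u⟩)
  have hsq (i : ι) : centeredSingle u i ^ 2 =
      (Pi.single u (1 - 2 / (Fintype.card ι : ℝ)) : ι → ℝ) i + ((Fintype.card ι : ℝ)⁻¹) ^ 2 := by
    rcases eq_or_ne i u with rfl | hi
    · simp only [centeredSingle, Pi.sub_apply, Pi.single_eq_same]; ring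
    · simp [centeredSingle, hi]
  simp_rw [hsq, sum_add_distrib, sum_pi_single', mem_univ, if_true, sum_const, card_univ,
    nsmul_eq_mul]
  have : (Fintype.card ι : ℝ) * ((Fintype.card ι : ℝ)⁻¹) ^ 2 = (Fintype.card ι : ℝ)⁻¹ := by
    field_simp
  rw [this, div_eq_mul_inv]
  linarith [inv_pos.mpr hcard]

theorem mulVec_centeredSingle_apply (M : Matrix ι ι ℝ) (v : ι) :
    (M *ᵥ centeredSingle u) v = M v u - (∑ j, M v j) / Fintype.card ι := by
  rw [centeredSingle, mulVec_sub, mulVec_single_one]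
  simp [mulVec, dotProduct, sum_mul, div_eq_mul_inv]

end centeredSingle

theorem lt_pow_of_log_div_log_lt {N r : ℝ} (hN : 0 < N) (hr : 1 < r) {t : ℕ}
    (ht : Real.log N / Real.log r < t) : N < r ^ t := by
  rw [div_lt_iff₀ (Real.log_pos hr), ← Real.log_pow] at ht
  exact (Real.log_lt_log_iff hN (by positivity)).mp ht

theorem sensitivity_of_xnets_log_depth_general
    (n D : ℕ) (lam : ℝ)
    (hlam0 : 0 < lam) (hlamD : lam < D)
    (A : Matrix (Fin n) (Fin n) ℝ)
    (hrow : ∀ v, ∑ u, A v u = D)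
    (hcol : ∀ u, ∑ v, A v u = D)
    (hsv : ∀ x : Fin n → ℝ, (∑ i, x i) = 0 →
      Real.sqrt (∑ i, (A.mulVec x i) ^ 2) ≤ lam * Real.sqrt (∑ i, (x i) ^ 2))
    (t : ℕ) (ht : Real.log n / Real.log ((D : ℝ) / lam) < (t : ℝ)) :
    ∀ v u, 0 < (A ^ t) v u := by
  intro v u
  have hn : (0 : ℝ) < n := Nat.cast_pos.mpr v.pos
  have hgap : n * lam ^ t < (D : ℝ) ^ t := by
    have := lt_pow_of_log_div_log_lt hn ((one_lt_div hlam0).mpr hlamD) ht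
    rwa [div_pow, lt_div_iff₀ (by positivity)] at this
  have hdev : |(A ^ t) v u - (D : ℝ) ^ t / n| ≤ lam ^ t := by
    have hbound := sqrt_sum_sq_pow_mulVec_le hcol (sum_centeredSingle u) hlam0.le hsv t
    have hentry := mulVec_centeredSingle_apply u (A ^ t) v
    rw [sum_pow_apply_eq_pow hrow, Fintype.card_fin] at hentry
    rw [← hentry]
    calc _ ≤ √(∑ i, (A ^ t *ᵥ centeredSingle u) i ^ 2) := abs_apply_le_sqrt_sum_sq _ v
      _ ≤ lam ^ t * √(∑ i, centeredSingle u i ^ 2) := hbound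
      _ ≤ lam ^ t := mul_le_of_le_one_right (by positivity)
          (Real.sqrt_le_one.mpr (sum_sq_centeredSingle_le_one u))
  have hmain : lam ^ t < (D : ℝ) ^ t / n := by rw [lt_div_iff₀ hn]; linarith
  linarith [(abs_le.mp hdev).1]

/-- Theorem 1 of the paper (Sensitivity of X-Nets at logarithmic depth, spectral form):
for a 0/1, D-biregular n×n matrix `A` with second singular value at most `lam`, where
`0 < lam < D`, and every natural number `t > log n / log (D/lam)`, every entry of `Aᵗ`
is strictly positive: every output neuron of the depth-t network is sensitive to every
input neuron. -/
theorem sensitivity_of_xnets_log_depth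
    (n D : ℕ) (hn : 0 < n) (hD : 0 < D) (lam : ℝ)
    (hlam0 : 0 < lam) (hlamD : lam < D)
    (A : Matrix (Fin n) (Fin n) ℝ)
    (hA01 : ∀ v u, A v u = 0 ∨ A v u = 1)
    (hrow : ∀ v, ∑ u, A v u = D)
    (hcol : ∀ u, ∑ v, A v u = D)
    (hsv : ∀ x : Fin n → ℝ, (∑ i, x i) = 0 →
      Real.sqrt (∑ i, (A.mulVec x i) ^ 2) ≤ lam * Real.sqrt (∑ i, (x i) ^ 2))
    (t : ℕ) (ht : Real.log n / Real.log ((D : ℝ) / lam) < (t : ℝ)) :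
    ∀ v u, 0 < (A ^ t) v u :=
  sensitivity_of_xnets_log_depth_general n D lam hlam0 hlamD A hrow hcol hsv t ht
end

section
/- Theorem 1 of the paper (Sensitivity of X-Nets, combinatorial form). Let n be an even positive integer and γ > 0. For k = 1,…,t, let G_k ⊆ Fin n × Fin n be a bipartite layer graph such that both G_k and its reverse {(v,u) : (u,v) ∈ G_k} have vertex expansion factor (1+γ): for every S ⊆ Fin n with 2·|S| ≤ n, both |N_{G_k}(S)| ≥ (1+γ)·|S| and |N_{G_k⁻¹}(S)| ≥ (1+γ)·|S|. Suppose t = i + j for natural numbers i, j with (1+γ)^i > n/2 and (1+γ)^j > n/2 (so t = O(log n) suffices). Then for every input node u and every output node v there exist nodes w_0 = u, w_1, …, w_t = v with (w_{k−1}, w_k) ∈ G_k for each k = 1,…,t; that is, every output neuron of the t-layer X-Net is sensitive to every input neuron. -/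
/-!
Starting from `u`, the set of nodes reachable after `k` layers grows by a factor `1 + γ` per
layer as long as it has at most `n / 2` elements, and once it has more than `n / 2` elements it
keeps that property (expand a subset of exactly `n / 2` elements, which needs `n` even). So after
`i` layers more than half of the nodes are reachable from `u`. Symmetrically, the reverse graphs
show that more than half of the nodes at depth `i` reach `v` through the last `j` layers. Two sets
with more than `n / 2` elements meet, and a common node splices the two paths together.
-/

def layerNbhd {n : ℕ} (G : Set (Fin n × Fin n)) (S : Set (Fin n)) : Set (Fin n) :=
  {v | ∃ u ∈ S, (u, v) ∈ G}

def layerRev {n : ℕ} (G : Set (Fin n × Fin n)) : Set (Fin n × Fin n) :=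
  {p | (p.2, p.1) ∈ G}

variable {n : ℕ}

def IsVertexExpander (γ : ℝ) (G : Set (Fin n × Fin n)) : Prop :=
  ∀ S : Set (Fin n), 2 * S.ncard ≤ n → (1 + γ) * S.ncard ≤ (layerNbhd G S).ncard

lemma layerNbhd_mono (G : Set (Fin n × Fin n)) {S T : Set (Fin n)} (h : S ⊆ T) :
    layerNbhd G S ⊆ layerNbhd G T := by
  rintro x ⟨u, hu, hG⟩
  exact ⟨u, h hu, hG⟩

namespace IsVertexExpander

variable {γ : ℝ} {G : Set (Fin n × Fin n)}

lemma lt_two_mul_ncard_layerNbhd (hG : IsVertexExpander γ G) (heven : Even n) (hγ : 0 < γ)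
    {S : Set (Fin n)} (hS : n < 2 * S.ncard) : n < 2 * (layerNbhd G S).ncard := by
  obtain ⟨h, rfl⟩ := heven
  obtain ⟨T, hTS, hT⟩ := Set.exists_subset_card_eq (s := S) (n := h) (by omega)
  have hh : 0 < h := by
    have := Set.ncard_le_card S
    rw [Nat.card_fin] at this
    omega
  have hgrow : (h : ℝ) < (layerNbhd G T).ncard := by
    have hT' := hG T (by omega)
    rw [hT] at hT'
    have : (0 : ℝ) < h := by exact_mod_cast hh
    nlinarith
  have hsub := Set.ncard_le_ncard (layerNbhd_mono G hTS)
  have : h < (layerNbhd G T).ncard := by exact_mod_cast hgrow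
  omega

lemma mul_le_ncard_layerNbhd (hG : IsVertexExpander γ G) (heven : Even n) (hγ : 0 < γ)
    {S : Set (Fin n)} {c : ℝ} (hS : c ≤ S.ncard ∨ n < 2 * S.ncard) :
    (1 + γ) * c ≤ (layerNbhd G S).ncard ∨ n < 2 * (layerNbhd G S).ncard := by
  by_cases hhalf : 2 * S.ncard ≤ n
  · left
    have hc : c ≤ S.ncard := hS.resolve_right (by omega)
    calc (1 + γ) * c ≤ (1 + γ) * S.ncard := by gcongr
      _ ≤ _ := hG S hhalf
  · exact Or.inr (hG.lt_two_mul_ncard_layerNbhd heven hγ (by omega))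

end IsVertexExpander

lemma pow_mul_le_ncard_or_lt_two_mul_ncard {γ : ℝ} (heven : Even n) (hγ : 0 < γ)
    {H : ℕ → Set (Fin n × Fin n)} {R : ℕ → Set (Fin n)} {m : ℕ}
    (hH : ∀ k < m, IsVertexExpander γ (H k)) (hR : ∀ k < m, layerNbhd (H k) (R k) ⊆ R (k + 1)) :
    ∀ k ≤ m, (1 + γ) ^ k * (R 0).ncard ≤ (R k).ncard ∨ n < 2 * (R k).ncard := by
  intro k hk
  induction k with
  | zero => simp
  | succ k ih =>
    have hsub := Set.ncard_le_ncard (hR k hk)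
    have hsub' : ((layerNbhd (H k) (R k)).ncard : ℝ) ≤ (R (k + 1)).ncard := by exact_mod_cast hsub
    rcases (hH k hk).mul_le_ncard_layerNbhd heven hγ (ih (by omega)) with hle | hbig
    · left
      rw [pow_succ', mul_assoc]
      exact hle.trans hsub'
    · exact Or.inr (by omega)

lemma lt_two_mul_ncard_of_expanding_chain {γ : ℝ} (heven : Even n) (hγ : 0 < γ)
    {H : ℕ → Set (Fin n × Fin n)} {R : ℕ → Set (Fin n)} {m : ℕ}
    (hH : ∀ k < m, IsVertexExpander γ (H k)) (hR : ∀ k < m, layerNbhd (H k) (R k) ⊆ R (k + 1))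
    (h0 : (R 0).Nonempty) (hm : (n : ℝ) / 2 < (1 + γ) ^ m) : n < 2 * (R m).ncard := by
  rcases pow_mul_le_ncard_or_lt_two_mul_ncard heven hγ hH hR m le_rfl with hle | hbig
  · have h1 : (1 : ℝ) ≤ (R 0).ncard := by exact_mod_cast h0.ncard_pos
    have : (n : ℝ) < 2 * (R m).ncard := by nlinarith [pow_pos (by linarith : (0 : ℝ) < 1 + γ) m]
    exact_mod_cast this
  · exact hbig

def IsLayerPath (G : ℕ → Set (Fin n × Fin n)) (a b : ℕ) (w : ℕ → Fin n) : Prop :=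
  ∀ k, a < k → k ≤ b → (w (k - 1), w k) ∈ G k

def LayerReach (G : ℕ → Set (Fin n × Fin n)) (a b : ℕ) (x y : Fin n) : Prop :=
  ∃ w : ℕ → Fin n, w a = x ∧ w b = y ∧ IsLayerPath G a b w

namespace LayerReach

variable {G : ℕ → Set (Fin n × Fin n)}

lemma refl (a : ℕ) (x : Fin n) : LayerReach G a a x x :=
  ⟨fun _ => x, rfl, rfl, fun _ hak hka => absurd hka (by omega)⟩

lemma of_mem {b : ℕ} {x y : Fin n} (h : (x, y) ∈ G (b + 1)) : LayerReach G b (b + 1) x y := by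
  refine ⟨fun k => if k ≤ b then x else y, by simp, by simp, fun k hbk hkb => ?_⟩
  obtain rfl : k = b + 1 := by omega
  simpa using h

lemma trans {a b c : ℕ} {x y z : Fin n} (hab : a ≤ b) (hbc : b ≤ c) (hxy : LayerReach G a b x y)
    (hyz : LayerReach G b c y z) : LayerReach G a c x z := by
  obtain ⟨w, hwa, hwb, hw⟩ := hxy
  obtain ⟨w', hwb', hwc', hw'⟩ := hyz
  set p : ℕ → Fin n := fun k => if k ≤ b then w k else w' k
  have hp_le : ∀ k ≤ b, p k = w k := fun k hk => if_pos hk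
  have hp_ge : ∀ k, b ≤ k → p k = w' k := by
    intro k hk
    rcases hk.eq_or_lt with rfl | hlt
    · rw [hp_le _ le_rfl, hwb, hwb']
    · exact if_neg (by omega)
  refine ⟨p, by rw [hp_le a hab, hwa], by rw [hp_ge c hbc, hwc'], fun k hak hkc => ?_⟩
  by_cases hkb : k ≤ b
  · rw [hp_le k hkb, hp_le (k - 1) (by omega)]
    exact hw k hak hkb
  · rw [hp_ge k (by omega), hp_ge (k - 1) (by omega)]
    exact hw' k (by omega) hkc

end LayerReach

lemma layerNbhd_setOf_layerReach_subset (G : ℕ → Set (Fin n × Fin n)) {a k : ℕ} (hak : a ≤ k)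
    (u : Fin n) :
    layerNbhd (G (k + 1)) {y | LayerReach G a k u y} ⊆ {y | LayerReach G a (k + 1) u y} := by
  rintro z ⟨y, hy, hyz⟩
  exact LayerReach.trans hak k.le_succ hy (LayerReach.of_mem hyz)

lemma layerNbhd_layerRev_setOf_layerReach_subset (G : ℕ → Set (Fin n × Fin n)) {a b : ℕ}
    (hab : a + 1 ≤ b) (v : Fin n) :
    layerNbhd (layerRev (G (a + 1))) {y | LayerReach G (a + 1) b y v} ⊆
      {x | LayerReach G a b x v} := by
  rintro x ⟨y, hy, hxy⟩
  exact LayerReach.trans a.le_succ hab (LayerReach.of_mem hxy) hy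

theorem sensitivity_of_xnets_combinatorial_general
    (n : ℕ) (heven : Even n) (γ : ℝ) (hγ : 0 < γ)
    (t : ℕ) (G : ℕ → Set (Fin n × Fin n))
    (hexp : ∀ k, 1 ≤ k → k ≤ t → ∀ S : Set (Fin n), 2 * S.ncard ≤ n →
      (1 + γ) * S.ncard ≤ (layerNbhd (G k) S).ncard)
    (hexpRev : ∀ k, 1 ≤ k → k ≤ t → ∀ S : Set (Fin n), 2 * S.ncard ≤ n →
      (1 + γ) * S.ncard ≤ (layerNbhd (layerRev (G k)) S).ncard)
    (i j : ℕ) (hij : t = i + j)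
    (hi : (n : ℝ) / 2 < (1 + γ) ^ i) (hj : (n : ℝ) / 2 < (1 + γ) ^ j)
    (u v : Fin n) :
    ∃ w : ℕ → Fin n, w 0 = u ∧ w t = v ∧
      ∀ k, 1 ≤ k → k ≤ t → (w (k - 1), w k) ∈ G k := by
  have hfwd : n < 2 * {x | LayerReach G 0 i u x}.ncard :=
    lt_two_mul_ncard_of_expanding_chain (H := fun k => G (k + 1))
      (R := fun k => {x | LayerReach G 0 k u x}) heven hγ
      (fun k hk => hexp (k + 1) (by omega) (by omega))
      (fun k _ => layerNbhd_setOf_layerReach_subset G k.zero_le u) ⟨u, LayerReach.refl 0 u⟩ hi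
  have hbwd : n < 2 * {x | LayerReach G (t - j) t x v}.ncard := by
    refine lt_two_mul_ncard_of_expanding_chain (H := fun k => layerRev (G (t - k)))
      (R := fun k => {x | LayerReach G (t - k) t x v}) heven hγ
      (fun k hk => hexpRev (t - k) (by omega) (by omega)) (fun k hk => ?_)
      ⟨v, LayerReach.refl t v⟩ hj
    have hk : t - k = t - (k + 1) + 1 := by omega
    simp only [hk]
    exact layerNbhd_layerRev_setOf_layerReach_subset G (by omega) v
  obtain ⟨x, hux, hxv⟩ := Set.nonempty_inter_of_lt_ncard_add_ncard
    (s := {x | LayerReach G 0 i u x}) (t := {x | LayerReach G (t - j) t x v})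
    (by rw [Nat.card_fin]; omega)
  rw [show t - j = i by omega] at hxv
  exact LayerReach.trans i.zero_le (by omega) hux hxv

/-- Theorem 1 of the paper (Sensitivity of X-Nets, combinatorial form): `n` even and
positive, `γ > 0`, and each layer graph `G k` (k = 1,…,t) together with its reverse has
vertex expansion factor `(1+γ)` on sets of size at most n/2. If `t = i + j` with
`(1+γ)^i > n/2` and `(1+γ)^j > n/2` (so `t = O(log n)` suffices), then for every input
node `u` and output node `v` there is a path `w 0 = u, w 1, …, w t = v` through the
network with `(w (k-1), w k) ∈ G k` for `k = 1,…,t`: every output neuron of the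
t-layer X-Net is sensitive to every input neuron. -/
theorem sensitivity_of_xnets_combinatorial
    (n : ℕ) (hn : 0 < n) (heven : Even n) (γ : ℝ) (hγ : 0 < γ)
    (t : ℕ) (G : ℕ → Set (Fin n × Fin n))
    (hexp : ∀ k, 1 ≤ k → k ≤ t → ∀ S : Set (Fin n), 2 * S.ncard ≤ n →
      (1 + γ) * S.ncard ≤ (layerNbhd (G k) S).ncard)
    (hexpRev : ∀ k, 1 ≤ k → k ≤ t → ∀ S : Set (Fin n), 2 * S.ncard ≤ n →
      (1 + γ) * S.ncard ≤ (layerNbhd (layerRev (G k)) S).ncard)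
    (i j : ℕ) (hij : t = i + j)
    (hi : (n : ℝ) / 2 < (1 + γ) ^ i) (hj : (n : ℝ) / 2 < (1 + γ) ^ j)
    (u v : Fin n) :
    ∃ w : ℕ → Fin n, w 0 = u ∧ w t = v ∧
      ∀ k, 1 ≤ k → k ≤ t → (w (k - 1), w k) ∈ G k :=
  sensitivity_of_xnets_combinatorial_general n heven γ hγ t G hexp hexpRev i j hij hi hj u v
end
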